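/- Consider the ODE Δ̇ = −MΔ where M = Σ(ΣᵀΣ + εI)⁻¹Σᵀ. If Δ(0) lies in the range of Σ, then Δ(t) = exp(−tM)Δ(0) converges to 0 as t → ∞. -/

import Mathlib

open Matrix Filter

/-- For the ODE `Δ̇ = −MΔ` with `M = Σ(ΣᵀΣ + εI)⁻¹Σᵀ`, if `Δ(0)` lies in the range of `Σ`,
then the solution `Δ(t) = exp(−tM)Δ(0)` converges to `0` as `t → ∞`. -/
theorem delta_converges_on_range {m n : ℕ} (Sg : Matrix (Fin m) (Fin n) ℝ) (ε : ℝ) (hε : 0 < ε)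
    (Δ₀ : Fin m → ℝ) (hΔ₀ : ∃ w : Fin n → ℝ, Sg.mulVec w = Δ₀) :
    Tendsto
      (fun t : ℝ =>
        (NormedSpace.exp
          ((-t) • (Sg * (Sgᵀ * Sg + ε • (1 : Matrix (Fin n) (Fin n) ℝ))⁻¹ * Sgᵀ))).mulVec Δ₀)
      atTop (nhds 0) := by
  obtain ⟨w, hw⟩ := hΔ₀
  set B : Matrix (Fin n) (Fin n) ℝ := Sgᵀ * Sg + ε • (1 : Matrix (Fin n) (Fin n) ℝ) with hBdef
  set M : Matrix (Fin m) (Fin m) ℝ := Sg * B⁻¹ * Sgᵀ with hMdef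
  have hSgT : Sgᵀ = Sgᴴ := (Matrix.conjTranspose_eq_transpose_of_trivial Sg).symm
  -- B is positive definite
  have hB : B.PosDef := by
    have h1 : (Sgᵀ * Sg).PosSemidef := by
      rw [hSgT]; exact Matrix.posSemidef_conjTranspose_mul_self Sg
    have h2 : (ε • (1 : Matrix (Fin n) (Fin n) ℝ)).PosDef := by
      rw [Matrix.smul_one_eq_diagonal]
      exact Matrix.posDef_diagonal_iff.mpr fun _ => hε
    exact Matrix.PosDef.posSemidef_add h1 h2
  have hBinv : (B⁻¹).PosDef := hB.inv
  -- M is positive semidefinite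
  have hMpsd : M.PosSemidef := by
    rw [hMdef, hSgT]
    exact hBinv.posSemidef.mul_mul_conjTranspose_same Sg
  have hM : M.IsHermitian := hMpsd.1
  set U : Matrix (Fin m) (Fin m) ℝ := (hM.eigenvectorUnitary : Matrix (Fin m) (Fin m) ℝ)
    with hUdef
  have hUunit : IsUnit U := by
    apply Matrix.isUnit_iff_isUnit_det _ |>.2
    apply IsUnit.of_mul_eq_one (star U).det
    rw [← Matrix.det_mul, (Matrix.mem_unitaryGroup_iff).mp hM.eigenvectorUnitary.2, Matrix.det_one]
  have hUinv : U⁻¹ = star U :=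
    Matrix.inv_eq_left_inv ((Matrix.mem_unitaryGroup_iff').mp hM.eigenvectorUnitary.2)
  -- the coefficient vector
  set c : Fin m → ℝ := (star U).mulVec Δ₀ with hcdef
  -- key: coefficients vanish on the kernel eigenvectors
  have hker : ∀ i, hM.eigenvalues i = 0 → c i = 0 := by
    intro i h0
    set v : Fin m → ℝ := ⇑(hM.eigenvectorBasis i) with hvdef
    have hv : M.mulVec v = 0 := by
      have := hM.mulVec_eigenvectorBasis i
      rw [h0, zero_smul] at this
      exact this
    -- deduce Sgᵀ *ᵥ v = 0
    have hSv : Sgᵀ.mulVec v = 0 := by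
      by_contra hne
      have hpos := hBinv.dotProduct_mulVec_pos hne
      have hzero : (Sgᵀ.mulVec v) ⬝ᵥ (B⁻¹).mulVec (Sgᵀ.mulVec v) = 0 := by
        have h1 : M.mulVec v = Sg.mulVec ((B⁻¹).mulVec (Sgᵀ.mulVec v)) := by
          rw [hMdef, ← Matrix.mulVec_mulVec, ← Matrix.mulVec_mulVec]
        have h2 : v ⬝ᵥ M.mulVec v = 0 := by rw [hv]; simp
        rw [h1, Matrix.dotProduct_mulVec, ← Matrix.mulVec_transpose] at h2
        exact h2
      simp only [star_trivial] at hpos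
      rw [hzero] at hpos
      exact lt_irrefl _ hpos
    have hci : c i = v ⬝ᵥ Δ₀ := by
      rw [hcdef]
      simp [Matrix.mulVec, dotProduct, hUdef, hvdef, mul_comm]
    rw [hci, ← hw, Matrix.dotProduct_mulVec, ← Matrix.mulVec_transpose, hSv,
      zero_dotProduct]
  -- rewrite the exponential via the spectral theorem
  have hexp : ∀ t : ℝ, (NormedSpace.exp ((-t) • M)).mulVec Δ₀ =
      U.mulVec (fun i => Real.exp (-t * hM.eigenvalues i) * c i) := by
    intro t
    have hdiag : (-t) • M =
        U * ((-t) • Matrix.diagonal (RCLike.ofReal ∘ hM.eigenvalues)) * U⁻¹ := by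
      rw [hUinv]
      conv_lhs => rw [hM.spectral_theorem]
      rw [Unitary.conjStarAlgAut_apply]
      rw [Matrix.mul_smul, Matrix.smul_mul]
    rw [hdiag, Matrix.exp_conj U _ hUunit, hUinv]
    have hde : NormedSpace.exp ((-t) • Matrix.diagonal (RCLike.ofReal ∘ hM.eigenvalues)) =
        Matrix.diagonal (fun i => Real.exp (-t * hM.eigenvalues i)) := by
      rw [← Matrix.diagonal_smul, Matrix.exp_diagonal]
      rw [Pi.exp_def]
      funext i
      simp [Real.exp_eq_exp_ℝ, mul_comm]
    rw [hde, ← Matrix.mulVec_mulVec, ← Matrix.mulVec_mulVec, ← hcdef]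
    have hdc : Matrix.diagonal (fun i => Real.exp (-t * hM.eigenvalues i)) *ᵥ c
        = fun i => Real.exp (-t * hM.eigenvalues i) * c i := by
      funext j
      exact Matrix.mulVec_diagonal _ _ _
    rw [hdc]
  simp only [hexp]
  -- convergence
  have hf : Tendsto (fun t : ℝ => (fun i => Real.exp (-t * hM.eigenvalues i) * c i))
      atTop (nhds 0) := by
    rw [tendsto_pi_nhds]
    intro i
    have hev : 0 ≤ hM.eigenvalues i := hMpsd.eigenvalues_nonneg i
    rcases hev.eq_or_lt.imp Eq.symm id with h0 | hpos
    · have : ∀ t : ℝ, Real.exp (-t * hM.eigenvalues i) * c i = 0 := by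
        intro t; rw [hker i h0, mul_zero]
      simp only [this, Pi.zero_apply]
      exact tendsto_const_nhds
    · have h1 : Tendsto (fun t : ℝ => Real.exp (-t * hM.eigenvalues i)) atTop (nhds 0) := by
        apply Real.tendsto_exp_atBot.comp
        have : Tendsto (fun t : ℝ => t * hM.eigenvalues i) atTop atTop :=
          Tendsto.atTop_mul_const hpos tendsto_id
        simpa [Function.comp_def, neg_mul] using tendsto_neg_atTop_atBot.comp this
      have := h1.mul_const (c i)
      simpa using this
  have hcont : Continuous (fun v : Fin m → ℝ => U.mulVec v) :=
    LinearMap.continuous_of_finiteDimensional (Matrix.mulVecLin U)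
  have := (hcont.tendsto 0).comp hf
  simpa [Function.comp_def] using this
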